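/- arXiv:1212.1724 — 3 statements merged into one kernel-verified Lean document; each statement's English description precedes it below -/
import Mathlib

section
/- Let X be a finite simple graph, n ≥ 1 an integer, and α < 0. If there is a quantum homomorphism from the complete graph K_n to X, and there exist m ≥ 1 and unit vectors v_x ∈ ℝ^m (x ∈ V(X)) with v_x · v_{x'} = α whenever x,x' are adjacent in X, then n ≤ 1 − 1/α. In other words, the quantum clique number satisfies ω_q(X) ≤ ϑ̄(X). -/
open Matrix Finset

/-- A quantum homomorphism from `X` to `Y`: for some `d ≥ 1` there are complex `d × d`
projectors `E x y` (Hermitian idempotents) with `∑ y, E x y = 1` for every `x`,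
`E x y * E x y' = 0` whenever `y ≠ y'`, and `E x y * E x' y' = 0` whenever `x, x'`
are adjacent in `X` and `y, y'` are equal or nonadjacent in `Y`. -/
def IsQuantumHom {V W : Type} [Fintype V] [Fintype W]
    (X : SimpleGraph V) (Y : SimpleGraph W) : Prop :=
  ∃ d : ℕ, 0 < d ∧ ∃ E : V → W → Matrix (Fin d) (Fin d) ℂ,
    (∀ x y, (E x y).IsHermitian ∧ E x y * E x y = E x y) ∧
    (∀ x, ∑ y, E x y = 1) ∧
    (∀ x y y', y ≠ y' → E x y * E x y' = 0) ∧
    (∀ x x' y y', X.Adj x x' → ¬ Y.Adj y y' → E x y * E x' y' = 0)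

/-- The homomorphic product `X ⋉ Y`: distinct vertices `(x,y)` and `(x',y')` are adjacent
iff `x = x'`, or (`x ~ x'` in `X` and `y, y'` are equal or nonadjacent in `Y`). -/
def homProd {V W : Type} (X : SimpleGraph V) (Y : SimpleGraph W) :
    SimpleGraph (V × W) where
  Adj a b := a ≠ b ∧ (a.1 = b.1 ∨ (X.Adj a.1 b.1 ∧ ¬ Y.Adj a.2 b.2))
  symm := by
    constructor
    rintro a b ⟨hne, h⟩
    refine ⟨hne.symm, ?_⟩
    rcases h with h | ⟨h1, h2⟩
    · exact Or.inl h.symm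
    · exact Or.inr ⟨h1.symm, fun hb => h2 hb.symm⟩
  loopless := ⟨fun a ha => ha.1 rfl⟩

/-- The independence number: the largest size of a set of pairwise nonadjacent vertices. -/
noncomputable def indepNum {U : Type} [Fintype U] (Z : SimpleGraph U) : ℕ :=
  sSup {n | ∃ s : Finset U, s.card = n ∧ ∀ a ∈ s, ∀ b ∈ s, a ≠ b → ¬ Z.Adj a b}

/-! Let `E i y` be the projectors of a quantum homomorphism `K_n →q X` in dimension `d` and `v` an
`α`-representation of `X`. The sum `∑ i j y y', (v y ⬝ v y') tr (E i y E j y')` pairs two positive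
semidefinite Gram matrices, so it is nonnegative. The measurement relations evaluate it: each block
`i = j` contributes `d`, and in a block `i ≠ j` only adjacent `y, y'` survive, each weighted by `α`,
so the block contributes `α d`. Hence `n d (1 + (n - 1) α) ≥ 0`, which for `α < 0` is
`n ≤ 1 - 1/α`. -/

open scoped ComplexOrder

section Trace

variable {ι n : Type*} [Fintype ι] [Fintype n]

theorem Matrix.IsHermitian.re_trace_mul_self_nonneg {A : Matrix n n ℂ} (hA : A.IsHermitian) :
    0 ≤ (A * A).trace.re := by
  have h : 0 ≤ (Aᴴ * A).trace := (posSemidef_conjTranspose_mul_self A).trace_nonneg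
  rw [hA.eq] at h
  exact (Complex.nonneg_iff.mp h).1

/-- The sum equals `∑ k, tr (M k)²` for the Hermitian matrices `M k = ∑ a, w a k • P a`. -/
theorem sum_sum_dotProduct_mul_re_trace_nonneg {m : Type*} [Fintype m]
    (P : ι → Matrix n n ℂ) (hP : ∀ a, (P a).IsHermitian) (w : ι → m → ℝ) :
    0 ≤ ∑ a, ∑ b, (w a ⬝ᵥ w b) * (P a * P b).trace.re := by
  set M : m → Matrix n n ℂ := fun k => ∑ a, w a k • P a
  have hM : ∀ k, (M k).IsHermitian := fun k =>
    isSelfAdjoint_sum _ fun a _ => (hP a).smul (IsSelfAdjoint.all (w a k))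
  have hMM : ∀ k, (M k * M k).trace.re = ∑ a, ∑ b, w a k * w b k * (P a * P b).trace.re := by
    intro k
    simp only [M, Finset.sum_mul_sum, trace_sum, smul_mul_smul_comm, trace_smul, Complex.re_sum,
      Complex.smul_re, smul_eq_mul, mul_assoc]
  have hsum : ∑ k, (M k * M k).trace.re = ∑ a, ∑ b, (w a ⬝ᵥ w b) * (P a * P b).trace.re := by
    simp only [hMM, dotProduct, Finset.sum_mul]
    rw [Finset.sum_comm]
    exact Finset.sum_congr rfl fun a _ => Finset.sum_comm
  exact hsum ▸ Finset.sum_nonneg fun k _ => (hM k).re_trace_mul_self_nonneg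

end Trace

section ProjectiveMeasurement

variable {W n m : Type*} [Fintype W] [Fintype n] [DecidableEq n] [Fintype m]

theorem sum_sum_trace_mul_eq_card {A B : W → Matrix n n ℂ} (hA : ∑ y, A y = 1)
    (hB : ∑ y, B y = 1) : ∑ y, ∑ y', (A y * B y').trace = Fintype.card n := by
  simp only [← trace_sum, ← Finset.sum_mul_sum, hA, hB, one_mul, trace_one]

theorem sum_sum_dotProduct_mul_re_trace_self {E : W → Matrix n n ℂ}
    (hidem : ∀ y, E y * E y = E y) (horth : ∀ y y', y ≠ y' → E y * E y' = 0)
    (hsum : ∑ y, E y = 1) {v : W → m → ℝ} (hv : ∀ y, v y ⬝ᵥ v y = 1) :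
    ∑ y, ∑ y', (v y ⬝ᵥ v y') * (E y * E y').trace.re = Fintype.card n := by
  have hrow : ∀ y, ∑ y', (v y ⬝ᵥ v y') * (E y * E y').trace.re = (E y).trace.re := fun y => by
    rw [Finset.sum_eq_single_of_mem y (Finset.mem_univ y)
      fun y' _ hy' => by rw [horth y y' hy'.symm, trace_zero, Complex.zero_re, mul_zero],
      hv, hidem, one_mul]
  simp only [hrow, ← Complex.re_sum, ← trace_sum, hsum, trace_one, Complex.natCast_re]

theorem sum_sum_dotProduct_mul_re_trace_of_adj (Y : SimpleGraph W) {A B : W → Matrix n n ℂ}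
    (hA : ∑ y, A y = 1) (hB : ∑ y, B y = 1) (hAB : ∀ y y', ¬ Y.Adj y y' → A y * B y' = 0)
    {v : W → m → ℝ} {α : ℝ} (hv : ∀ y y', Y.Adj y y' → v y ⬝ᵥ v y' = α) :
    ∑ y, ∑ y', (v y ⬝ᵥ v y') * (A y * B y').trace.re = α * Fintype.card n := by
  have hterm : ∀ y y', (v y ⬝ᵥ v y') * (A y * B y').trace.re = α * (A y * B y').trace.re := by
    intro y y'
    by_cases h : Y.Adj y y'
    · rw [hv y y' h]
    · rw [hAB y y' h, trace_zero, Complex.zero_re, mul_zero, mul_zero]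
  simp only [hterm, ← Finset.mul_sum, ← Complex.re_sum, sum_sum_trace_mul_eq_card hA hB,
    Complex.natCast_re]

end ProjectiveMeasurement

theorem sum_sum_eq_of_diag_of_offDiag {ι R : Type*} [Fintype ι] [CommRing R] {g : ι → ι → R}
    {a b : R} (hdiag : ∀ i, g i i = a) (hoff : ∀ i j, i ≠ j → g i j = b) :
    ∑ i, ∑ j, g i j = Fintype.card ι * (a + (Fintype.card ι - 1) * b) := by
  classical
  have hg : ∀ i j, g i j = b + if i = j then a - b else 0 := fun i j => by
    by_cases h : i = j
    · subst h; simp [hdiag]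
    · simp [h, hoff i j h]
  simp only [hg, Finset.sum_add_distrib, Finset.sum_ite_eq, Finset.mem_univ, if_true,
    Finset.sum_const, Finset.card_univ, nsmul_eq_mul]
  ring

theorem le_one_sub_one_div_of_nonneg {n d α : ℝ} (hn : 0 ≤ n) (hd : 0 < d) (hα : α < 0)
    (h : 0 ≤ n * (d + (n - 1) * (α * d))) : n ≤ 1 - 1 / α := by
  rcases hn.eq_or_lt with rfl | hn
  · linarith [one_div_neg.mpr hα]
  have hfactor : 0 ≤ 1 + (n - 1) * α :=
    nonneg_of_mul_nonneg_left (by nlinarith [mul_pos hn hd]) hd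
  have hsub : n - 1 ≤ -1 / α := (le_div_iff_of_neg hα).2 (by linarith)
  linarith [neg_div α 1]

theorem qClique_le_theta_general {V : Type} [Fintype V]
    (X : SimpleGraph V) (n : ℕ) (α : ℝ) (hα : α < 0)
    (hq : IsQuantumHom (⊤ : SimpleGraph (Fin n)) X)
    (hrep : ∃ m : ℕ, 1 ≤ m ∧ ∃ v : V → (Fin m → ℝ),
      (∀ x, ∑ i, v x i * v x i = 1) ∧
      (∀ x x', X.Adj x x' → ∑ i, v x i * v x' i = α)) :
    (n : ℝ) ≤ 1 - 1 / α := by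
  obtain ⟨d, hd, E, hproj, hsum, horth, hadj⟩ := hq
  obtain ⟨m, -, v, hunit, hrepα⟩ := hrep
  set g : Fin n → Fin n → ℝ := fun i j => ∑ y, ∑ y', (v y ⬝ᵥ v y') * (E i y * E j y').trace.re
  have hdiag : ∀ i, g i i = d := fun i => by
    simpa using sum_sum_dotProduct_mul_re_trace_self (fun y => (hproj i y).2) (horth i) (hsum i)
      hunit
  have hoff : ∀ i j, i ≠ j → g i j = α * d := fun i j hij => by
    simpa using sum_sum_dotProduct_mul_re_trace_of_adj X (hsum i) (hsum j)
      (hadj i j · · ((SimpleGraph.top_adj i j).2 hij)) hrepα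
  have hnonneg : 0 ≤ ∑ i, ∑ j, g i j := by
    have h := sum_sum_dotProduct_mul_re_trace_nonneg (fun p : Fin n × V => E p.1 p.2)
      (fun p => (hproj p.1 p.2).1) (fun p => v p.2)
    simp only [Fintype.sum_prod_type] at h
    exact h.trans_eq (Finset.sum_congr rfl fun i _ => Finset.sum_comm)
  rw [sum_sum_eq_of_diag_of_offDiag hdiag hoff, Fintype.card_fin] at hnonneg
  exact le_one_sub_one_div_of_nonneg n.cast_nonneg (by exact_mod_cast hd) hα hnonneg

/-- If `K_n →q X` and `X` has an `α`-representation (`α < 0`), then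
`n ≤ 1 - 1/α`; i.e. `ω_q(X) ≤ ϑ̄(X)`. -/
theorem qClique_le_theta {V : Type} [Fintype V]
    (X : SimpleGraph V) (n : ℕ) (hn : 1 ≤ n) (α : ℝ) (hα : α < 0)
    (hq : IsQuantumHom (⊤ : SimpleGraph (Fin n)) X)
    (hrep : ∃ m : ℕ, 1 ≤ m ∧ ∃ v : V → (Fin m → ℝ),
      (∀ x, ∑ i, v x i * v x i = 1) ∧
      (∀ x x', X.Adj x x' → ∑ i, v x i * v x' i = α)) :
    (n : ℝ) ≤ 1 - 1 / α :=
  qClique_le_theta_general X n α hα hq hrep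
end

section
/- Let X be a finite simple graph and c ≥ 1 an integer. If there is a quantum homomorphism from X to the complete graph K_c, then X has a projective representation of value c: there exist r ≥ 1 and rank-r complex d×d projectors F_x (x ∈ V(X)) with d = c·r such that F_x·F_{x'} = 0 whenever x,x' are adjacent in X. Consequently ξ_f(X) ≤ χ_q(X). -/
open Matrix Finset

/-!
Direct-sum the projectors of a quantum `c`-colouring over the colours:
`F x = ⊕_y E x y` is a projector of size `c * d`. Its rank equals its trace
`∑_y tr (E x y) = tr (∑_y E x y) = d`, and for adjacent `x, x'` every block
`E x y * E x' y` vanishes because no colour is adjacent to itself in `K_c`.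
-/

theorem IsIdempotentElem.trace_eq_rank {K n : Type*} [Field K] [Fintype n] [DecidableEq n]
    {P : Matrix n n K} (hP : IsIdempotentElem P) : P.trace = P.rank := by
  have hlin : IsIdempotentElem (toLin' P) := hP.map toLinAlgEquiv'
  rw [← trace_toLin'_eq, ((LinearMap.isProj_range_iff_isIdempotentElem _).mpr hlin).trace]
  rfl

namespace Matrix

variable {K m o : Type*} [Fintype m] [Fintype o] [DecidableEq o]

theorem rank_blockDiagonal_of_sum_eq_one [DecidableEq m] [Field K] [CharZero K]
    {P : o → Matrix m m K} (hP : ∀ i, IsIdempotentElem (P i)) (hsum : ∑ i, P i = 1) :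
    (blockDiagonal P).rank = Fintype.card m := by
  have hidem : IsIdempotentElem (blockDiagonal P) := by
    rw [IsIdempotentElem, ← blockDiagonal_mul]
    exact congrArg blockDiagonal (funext hP)
  have htrace := hidem.trace_eq_rank
  rw [trace_blockDiagonal, ← trace_sum, hsum, trace_one] at htrace
  exact_mod_cast htrace.symm

theorem reindex_blockDiagonal_mul [Semiring K] {n : Type*} [Fintype n] (e : m × o ≃ n)
    (P Q : o → Matrix m m K) :
    reindex e e (blockDiagonal P) * reindex e e (blockDiagonal Q) =
      reindex e e (blockDiagonal (P * Q)) := by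
  rw [reindex_apply, reindex_apply, submatrix_mul_equiv, ← blockDiagonal_mul]
  rfl

end Matrix

theorem projRep_of_quantum_coloring_general {V : Type} [Fintype V]
    (X : SimpleGraph V) (c : ℕ)
    (hq : IsQuantumHom X (⊤ : SimpleGraph (Fin c))) :
    ∃ r : ℕ, 1 ≤ r ∧ ∃ F : V → Matrix (Fin (c * r)) (Fin (c * r)) ℂ,
      (∀ x, (F x).IsHermitian ∧ F x * F x = F x ∧ (F x).rank = r) ∧
      (∀ x x', X.Adj x x' → F x * F x' = 0) := by
  obtain ⟨d, hd, E, hproj, hsum, -, hadj⟩ := hq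
  let e : Fin d × Fin c ≃ Fin (c * d) := finProdFinEquiv.trans (finCongr (Nat.mul_comm d c))
  refine ⟨d, hd, fun x => reindex e e (blockDiagonal (E x)), fun x => ⟨?_, ?_, ?_⟩, ?_⟩
  · exact (isHermitian_blockDiagonal_iff.mpr fun y => (hproj x y).1).reindex e
  · rw [reindex_blockDiagonal_mul]
    exact congrArg (fun P => reindex e e (blockDiagonal P)) (funext fun y => (hproj x y).2)
  · rw [rank_reindex, rank_blockDiagonal_of_sum_eq_one (fun y => (hproj x y).2) (hsum x),
      Fintype.card_fin]
  · intro x x' hxx'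
    have hblocks : E x * E x' = 0 := funext fun y => hadj x x' y y hxx' (by simp)
    rw [reindex_blockDiagonal_mul, hblocks, blockDiagonal_zero, reindex_apply, submatrix_zero]
    rfl

/-- If `X →q K_c`, then `X` has a projective representation of value `c`;
consequently `ξ_f(X) ≤ χ_q(X)`. -/
theorem projRep_of_quantum_coloring {V : Type} [Fintype V]
    (X : SimpleGraph V) (c : ℕ) (hc : 1 ≤ c)
    (hq : IsQuantumHom X (⊤ : SimpleGraph (Fin c))) :
    ∃ r : ℕ, 1 ≤ r ∧ ∃ F : V → Matrix (Fin (c * r)) (Fin (c * r)) ℂ,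
      (∀ x, (F x).IsHermitian ∧ F x * F x = F x ∧ (F x).rank = r) ∧
      (∀ x x', X.Adj x x' → F x * F x' = 0) :=
  projRep_of_quantum_coloring_general X c hq
end

section
/- Let X and Y be finite simple graphs with a quantum homomorphism from X to Y, and suppose Y has a d/r-projective representation (d, r ≥ 1). Then X has a projective representation of the same value d/r: explicitly, if E_{x,y} ∈ M_{d'}(ℂ) are projectors giving the quantum homomorphism and F_y ∈ M_d(ℂ) are rank-r projectors with F_y·F_{y'} = 0 for adjacent y,y', then the matrices F_x := Σ_{y ∈ V(Y)} E_{x,y} ⊗ F_y are projectors of rank r·d' in M_{d·d'}(ℂ) satisfying F_x·F_{x'} = 0 whenever x,x' are adjacent in X. Consequently ξ_f(X) ≤ ξ_f(Y). -/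
open Matrix Finset

/-! For fixed `x` the matrices `E x y ⊗ₖ F y` are pairwise orthogonal projectors, because the
`E x y` are, so their sum is a projector; its rank is its trace, `∑ y, tr (E x y) * r = r * d'`.
For adjacent `x, x'` every term `(E x y * E x' y') ⊗ₖ (F y * F y')` of the product vanishes:
through the `F` factor when `y ~ y'` in `Y`, and through the `E` factor otherwise. -/

open Kronecker

namespace Matrix

theorem trace_eq_rank_of_isIdempotentElem {K n : Type*} [Field K] [Fintype n]
    [DecidableEq n] {M : Matrix n n K} (h : IsIdempotentElem M) : M.trace = M.rank := by
  have h' : IsIdempotentElem (toLin' M) := h.map toLinAlgEquiv'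
  rw [← trace_toLin'_eq, (LinearMap.IsIdempotentElem.isProj_range _ h').trace]
  rfl

variable {R ι m n : Type*} [Fintype ι] {A : ι → Matrix m m R} {B : ι → Matrix n n R}

theorem isHermitian_sum_kronecker [CommSemiring R] [StarRing R] (hA : ∀ i, (A i).IsHermitian)
    (hB : ∀ i, (B i).IsHermitian) : (∑ i, A i ⊗ₖ B i).IsHermitian := by
  refine isSelfAdjoint_sum _ fun i _ => ?_
  rw [IsSelfAdjoint, star_eq_conjTranspose, conjTranspose_kronecker, hA i, hB i]

variable [Fintype m] [Fintype n]

theorem sum_kronecker_mul_sum_kronecker [CommSemiring R] (A C : ι → Matrix m m R)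
    (B D : ι → Matrix n n R) :
    (∑ i, A i ⊗ₖ B i) * (∑ j, C j ⊗ₖ D j) =
      ∑ i, ∑ j, (A i * C j) ⊗ₖ (B i * D j) := by
  simp_rw [Finset.sum_mul_sum, mul_kronecker_mul]

theorem sum_kronecker_mul_sum_kronecker_eq_zero [CommSemiring R] {C : ι → Matrix m m R}
    {D : ι → Matrix n n R} (h : ∀ i j, A i * C j = 0 ∨ B i * D j = 0) :
    (∑ i, A i ⊗ₖ B i) * (∑ j, C j ⊗ₖ D j) = 0 := by
  rw [sum_kronecker_mul_sum_kronecker]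
  refine Finset.sum_eq_zero fun i _ => Finset.sum_eq_zero fun j _ => ?_
  rcases h i j with h | h
  · rw [h, zero_kronecker]
  · rw [h, kronecker_zero]

theorem isIdempotentElem_sum_kronecker [CommSemiring R]
    (hA : ∀ i, IsIdempotentElem (A i)) (hAorth : Pairwise fun i j => A i * A j = 0)
    (hB : ∀ i, IsIdempotentElem (B i)) : IsIdempotentElem (∑ i, A i ⊗ₖ B i) := by
  classical
  rw [IsIdempotentElem, sum_kronecker_mul_sum_kronecker]
  refine Finset.sum_congr rfl fun i _ => ?_
  rw [Finset.sum_eq_single_of_mem i (Finset.mem_univ i) fun j _ hji => by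
    rw [hAorth hji.symm, zero_kronecker], (hA i).eq, (hB i).eq]

theorem rank_sum_kronecker [Field R] [CharZero R] [DecidableEq m] [DecidableEq n] {r : ℕ}
    (hsum : ∑ i, A i = 1) (hB : ∀ i, IsIdempotentElem (B i)) (hrank : ∀ i, (B i).rank = r)
    (h : IsIdempotentElem (∑ i, A i ⊗ₖ B i)) :
    (∑ i, A i ⊗ₖ B i).rank = r * Fintype.card m := by
  have htrace : (∑ i, A i ⊗ₖ B i).trace = r * Fintype.card m := by
    simp_rw [trace_sum, trace_kronecker, trace_eq_rank_of_isIdempotentElem (hB _), hrank,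
      ← Finset.sum_mul, ← trace_sum, hsum, trace_one, mul_comm]
  exact_mod_cast (trace_eq_rank_of_isIdempotentElem h).symm.trans htrace

end Matrix

theorem projRep_of_quantumHom_general {V W : Type} [Fintype W]
    (X : SimpleGraph V) (Y : SimpleGraph W) (d' d r : ℕ)
    (E : V → W → Matrix (Fin d') (Fin d') ℂ)
    (hEproj : ∀ x y, (E x y).IsHermitian ∧ E x y * E x y = E x y)
    (hEsum : ∀ x, ∑ y, E x y = 1)
    (hEcons : ∀ x y y', y ≠ y' → E x y * E x y' = 0)
    (hEadj : ∀ x x' y y', X.Adj x x' → ¬ Y.Adj y y' → E x y * E x' y' = 0)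
    (F : W → Matrix (Fin d) (Fin d) ℂ)
    (hFproj : ∀ y, (F y).IsHermitian ∧ F y * F y = F y ∧ (F y).rank = r)
    (hFadj : ∀ y y', Y.Adj y y' → F y * F y' = 0) :
    (∀ x, ((∑ y, E x y ⊗ₖ F y).IsHermitian ∧
        (∑ y, E x y ⊗ₖ F y) * (∑ y, E x y ⊗ₖ F y) = ∑ y, E x y ⊗ₖ F y ∧
        (∑ y, E x y ⊗ₖ F y).rank = r * d')) ∧
    (∀ x x', X.Adj x x' →
        (∑ y, E x y ⊗ₖ F y) * (∑ y, E x' y ⊗ₖ F y) = 0) := by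
  refine ⟨fun x => ?_, fun x x' hadj => ?_⟩
  · have hidem : IsIdempotentElem (∑ y, E x y ⊗ₖ F y) :=
      isIdempotentElem_sum_kronecker (fun y => (hEproj x y).2) (fun y y' => hEcons x y y')
        fun y => (hFproj y).2.1
    refine ⟨isHermitian_sum_kronecker (fun y => (hEproj x y).1) fun y => (hFproj y).1,
      hidem, ?_⟩
    simpa only [Fintype.card_fin] using
      rank_sum_kronecker (hEsum x) (fun y => (hFproj y).2.1) (fun y => (hFproj y).2.2) hidem
  · refine sum_kronecker_mul_sum_kronecker_eq_zero fun y y' => ?_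
    by_cases hY : Y.Adj y y'
    · exact .inr (hFadj y y' hY)
    · exact .inl (hEadj x x' y y' hadj hY)

open Kronecker in
/-- If `E x y` are projectors giving a quantum homomorphism `X →q Y` in
dimension `d'`, and `F y` is a `d/r`-projective representation of `Y`, then
`F' x := ∑ y, E x y ⊗ₖ F y` is a `(d·d')/(r·d')`-projective representation of `X` (same
value `d/r`); consequently `ξ_f(X) ≤ ξ_f(Y)`. -/
theorem projRep_of_quantumHom {V W : Type} [Fintype V] [Fintype W]
    (X : SimpleGraph V) (Y : SimpleGraph W) (d' d r : ℕ)
    (hd' : 1 ≤ d') (hd : 1 ≤ d) (hr : 1 ≤ r)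
    (E : V → W → Matrix (Fin d') (Fin d') ℂ)
    (hEproj : ∀ x y, (E x y).IsHermitian ∧ E x y * E x y = E x y)
    (hEsum : ∀ x, ∑ y, E x y = 1)
    (hEcons : ∀ x y y', y ≠ y' → E x y * E x y' = 0)
    (hEadj : ∀ x x' y y', X.Adj x x' → ¬ Y.Adj y y' → E x y * E x' y' = 0)
    (F : W → Matrix (Fin d) (Fin d) ℂ)
    (hFproj : ∀ y, (F y).IsHermitian ∧ F y * F y = F y ∧ (F y).rank = r)
    (hFadj : ∀ y y', Y.Adj y y' → F y * F y' = 0) :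
    (∀ x, ((∑ y, E x y ⊗ₖ F y).IsHermitian ∧
        (∑ y, E x y ⊗ₖ F y) * (∑ y, E x y ⊗ₖ F y) = ∑ y, E x y ⊗ₖ F y ∧
        (∑ y, E x y ⊗ₖ F y).rank = r * d')) ∧
    (∀ x x', X.Adj x x' →
        (∑ y, E x y ⊗ₖ F y) * (∑ y, E x' y ⊗ₖ F y) = 0) :=
  projRep_of_quantumHom_general X Y d' d r E hEproj hEsum hEcons hEadj F hFproj hFadj
end
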